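/- Let G be a graph with vertices v1, …, vn and let M1, …, Mn, N1, …, Nn be graphs such that, for every i, Mi = ∅ implies Ni = ∅. Then there is a GS derivation from (M1 ⅋ N1) ⊗ ⋯ ⊗ (Mn ⅋ Nn) to G⟨M1, …, Mn⟩ ⅋ Ḡ⟨N1, …, Nn⟩, and dually there is a derivation using only the rules ai↑, ss↑, p↑ from G⟨M1, …, Mn⟩ ⊗ Ḡ⟨N1, …, Nn⟩ to (M1 ⊗ N1) ⅋ ⋯ ⅋ (Mn ⊗ Nn). -/

import Mathlib

namespace GSP

/-- Atoms: a propositional variable (coded by a natural number) with a polarity. -/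
abbrev Atom := ℕ × Bool

/-- The dual atom. -/
def dualAtom (a : Atom) : Atom := (a.1, !a.2)

/-- A finite, simple, undirected graph whose vertices are labelled by atoms. -/
structure LGraph where
  V : Type
  [fintype : Fintype V]
  adj : V → V → Prop
  symm : ∀ {v w : V}, adj v w → adj w v
  irrefl : ∀ v : V, ¬ adj v v
  label : V → Atom

attribute [instance] LGraph.fintype

namespace LGraph

/-- An isomorphism of labelled graphs: a vertex bijection preserving labels and
preserving and reflecting edges. -/
structure Iso (G H : LGraph) where
  toEquiv : G.V ≃ H.V
  adj_iff : ∀ v w : G.V, G.adj v w ↔ H.adj (toEquiv v) (toEquiv w)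
  label_eq : ∀ v : G.V, H.label (toEquiv v) = G.label v

/-- `G ≅ H` : the graphs `G` and `H` are isomorphic. -/
def iso (G H : LGraph) : Prop := Nonempty (Iso G H)

/-- The empty graph. -/
def empty : LGraph where
  V := Empty
  adj _ _ := False
  symm h := h.elim
  irrefl v := v.elim
  label v := v.elim

/-- The single-vertex graph labelled by the atom `a`. -/
def single (a : Atom) : LGraph where
  V := Unit
  adj _ _ := False
  symm h := h.elim
  irrefl _ h := h
  label _ := a

def parAdj (G H : LGraph) : G.V ⊕ H.V → G.V ⊕ H.V → Prop
  | .inl a, .inl b => G.adj a b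
  | .inr a, .inr b => H.adj a b
  | _, _ => False

/-- The par `G ⅋ H` : disjoint union of `G` and `H`. -/
def par (G H : LGraph) : LGraph where
  V := G.V ⊕ H.V
  adj := parAdj G H
  symm := by
    rintro (a | a) (b | b) h
    · exact G.symm h
    · exact h.elim
    · exact h.elim
    · exact H.symm h
  irrefl := by
    rintro (a | a) h
    · exact G.irrefl a h
    · exact H.irrefl a h
  label := Sum.elim G.label H.label

def tensorAdj (G H : LGraph) : G.V ⊕ H.V → G.V ⊕ H.V → Prop
  | .inl a, .inl b => G.adj a b
  | .inr a, .inr b => H.adj a b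
  | .inl _, .inr _ => True
  | .inr _, .inl _ => True

/-- The tensor `G ⊗ H` : join of `G` and `H` (disjoint union plus all edges in between). -/
def tensor (G H : LGraph) : LGraph where
  V := G.V ⊕ H.V
  adj := tensorAdj G H
  symm := by
    rintro (a | a) (b | b) h
    · exact G.symm h
    · exact trivial
    · exact trivial
    · exact H.symm h
  irrefl := by
    rintro (a | a) h
    · exact G.irrefl a h
    · exact H.irrefl a h
  label := Sum.elim G.label H.label

/-- The dual graph `Ḡ` : same vertices, complemented edges, dualized labels. -/
def dual (G : LGraph) : LGraph where
  V := G.V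
  adj v w := v ≠ w ∧ ¬ G.adj v w
  symm h := ⟨fun e => h.1 e.symm, fun h' => h.2 (G.symm h')⟩
  irrefl _ h := h.1 rfl
  label v := dualAtom (G.label v)

def plugAdj (C : LGraph) (R : Set C.V) (X : LGraph) : C.V ⊕ X.V → C.V ⊕ X.V → Prop
  | .inl a, .inl b => C.adj a b
  | .inr a, .inr b => X.adj a b
  | .inl a, .inr _ => a ∈ R
  | .inr _, .inl b => b ∈ R

/-- `C[X]_R` : the graph obtained from the context `C[·]_R` by inserting the graph `X`
as a module whose vertices are adjacent exactly to the vertices in `R`. -/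
def plug (C : LGraph) (R : Set C.V) (X : LGraph) : LGraph where
  V := C.V ⊕ X.V
  adj := plugAdj C R X
  symm := by
    rintro (a | a) (b | b) h
    · exact C.symm h
    · exact h
    · exact h
    · exact X.symm h
  irrefl := by
    rintro (a | a) h
    · exact C.irrefl a h
    · exact X.irrefl a h
  label := Sum.elim C.label X.label

def compAdj (G : LGraph) (H : G.V → LGraph) :
    (Σ v : G.V, (H v).V) → (Σ v : G.V, (H v).V) → Prop := fun x y =>
  (∃ (v : G.V) (a b : (H v).V), x = ⟨v, a⟩ ∧ y = ⟨v, b⟩ ∧ (H v).adj a b) ∨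
    (x.1 ≠ y.1 ∧ G.adj x.1 y.1)

/-- The composition `G⟨H v₁, …, H vₙ⟩` of the family `H` via the graph `G`:
replace each vertex `v` of `G` by the graph `H v`. -/
def comp (G : LGraph) (H : G.V → LGraph) : LGraph where
  V := Σ v : G.V, (H v).V
  adj := compAdj G H
  symm := by
    rintro x y (⟨v, a, b, hx, hy, hab⟩ | ⟨hne, hadj⟩)
    · exact Or.inl ⟨v, b, a, hy, hx, (H v).symm hab⟩
    · exact Or.inr ⟨hne.symm, G.symm hadj⟩
  irrefl := by
    rintro ⟨v, a⟩ (⟨w, x, y, hx, hy, hxy⟩ | ⟨hne, _⟩)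
    · have h := hx.symm.trans hy
      obtain rfl : x = y := by simpa using h
      exact (H w).irrefl x hxy
    · exact hne rfl
  label x := (H x.1).label x.2

/-- A module of `G` : a set `M` of vertices such that every vertex outside `M`
is adjacent either to all vertices of `M` or to none of them. -/
def IsModule (G : LGraph) (M : Set G.V) : Prop :=
  ∀ v ∉ M, ∀ x ∈ M, ∀ y ∈ M, (G.adj v x ↔ G.adj v y)

/-- A prime graph: at least 2 vertices and only trivial modules. -/
def Prime (G : LGraph) : Prop :=
  2 ≤ Fintype.card G.V ∧
    ∀ M : Set G.V, G.IsModule M → M = ∅ ∨ (∃ v, M = {v}) ∨ M = Set.univ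

/-- `G` is `P₄`-free: no four distinct vertices induce a path on 4 vertices. -/
def P4Free (G : LGraph) : Prop :=
  ¬ ∃ v₁ v₂ v₃ v₄ : G.V,
      v₁ ≠ v₂ ∧ v₁ ≠ v₃ ∧ v₁ ≠ v₄ ∧ v₂ ≠ v₃ ∧ v₂ ≠ v₄ ∧ v₃ ≠ v₄ ∧
      G.adj v₁ v₂ ∧ G.adj v₂ v₃ ∧ G.adj v₃ v₄ ∧
      ¬ G.adj v₁ v₃ ∧ ¬ G.adj v₁ v₄ ∧ ¬ G.adj v₂ v₄

end LGraph

open LGraph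

/-- The `n`-fold tensor `X₁ ⊗ ⋯ ⊗ Xₙ`. -/
def bigTensor : (n : ℕ) → (Fin n → LGraph) → LGraph
  | 0, _ => LGraph.empty
  | n + 1, F => (F 0).tensor (bigTensor n fun i => F i.succ)

/-- The `n`-fold par `X₁ ⅋ ⋯ ⅋ Xₙ`. -/
def bigPar : (n : ℕ) → (Fin n → LGraph) → LGraph
  | 0, _ => LGraph.empty
  | n + 1, F => (F 0).par (bigPar n fun i => F i.succ)

/-- The inference rules of system GS (premise, conclusion). -/
inductive GSRule : LGraph → LGraph → Prop
  /-- ai↓ : premise `∅`, conclusion `ā ⅋ a`. -/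
  | ai (a : Atom) : GSRule LGraph.empty ((single (dualAtom a)).par (single a))
  /-- ss↓ : premise `B[A]_S`, conclusion `B ⅋ A`, for `A ≠ ∅` and `S ≠ ∅`. -/
  | ss (A B : LGraph) (S : Set B.V) :
      Nonempty A.V → S ≠ ∅ → GSRule (B.plug S A) (B.par A)
  /-- p↓ : premise `(M₁ ⅋ N₁) ⊗ ⋯ ⊗ (Mₙ ⅋ Nₙ)`, conclusion `P̄⟨M₁,…,Mₙ⟩ ⅋ P⟨N₁,…,Nₙ⟩`,
  for `P` prime with `n = |V(P)| ≥ 4` and all `Mᵢ ≠ ∅`. -/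
  | p (n : ℕ) (P : LGraph) (e : P.V ≃ Fin n) (M N : Fin n → LGraph) :
      P.Prime → 4 ≤ n → (∀ i, Nonempty (M i).V) →
      GSRule (bigTensor n fun i => (M i).par (N i))
        ((P.dual.comp fun v => M (e v)).par (P.comp fun v => N (e v)))

/-- The "up" rules ai↑, ss↑, p↑ (premise, conclusion). -/
inductive UpRule : LGraph → LGraph → Prop
  /-- ai↑ : premise `a ⊗ ā`, conclusion `∅`. -/
  | ai (a : Atom) : UpRule ((single a).tensor (single (dualAtom a))) LGraph.empty
  /-- ss↑ : premise `B ⊗ A`, conclusion `B[A]_S`, for `A ≠ ∅` and `S ≠ V(B)`. -/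
  | ss (A B : LGraph) (S : Set B.V) :
      Nonempty A.V → S ≠ Set.univ → UpRule (B.tensor A) (B.plug S A)
  /-- p↑ : premise `P⟨M₁,…,Mₙ⟩ ⊗ P̄⟨N₁,…,Nₙ⟩`, conclusion `(M₁ ⊗ N₁) ⅋ ⋯ ⅋ (Mₙ ⊗ Nₙ)`,
  for `P` prime with `n = |V(P)| ≥ 4` and all `Mᵢ ≠ ∅`. -/
  | p (n : ℕ) (P : LGraph) (e : P.V ≃ Fin n) (M N : Fin n → LGraph) :
      P.Prime → 4 ≤ n → (∀ i, Nonempty (M i).V) →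
      UpRule ((P.comp fun v => M (e v)).tensor (P.dual.comp fun v => N (e v)))
        (bigPar n fun i => (M i).tensor (N i))

/-- The rules of system SGS : the rules of GS together with their duals. -/
def SGSRule (G H : LGraph) : Prop := GSRule G H ∨ UpRule G H

/-- A single inference step in a system: inside some context, replace a module
isomorphic to the premise of a rule by the corresponding conclusion. -/
def Step (Rules : LGraph → LGraph → Prop) (G H : LGraph) : Prop :=
  ∃ (C : LGraph) (R : Set C.V) (p c : LGraph),
    Rules p c ∧ G.iso (C.plug R p) ∧ H.iso (C.plug R c)

/-- A derivation in a system from `G` to `H` : a finite sequence of inference steps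
and isomorphisms leading from `G` to `H`. -/
def Deriv (Rules : LGraph → LGraph → Prop) (G H : LGraph) : Prop :=
  Relation.ReflTransGen (fun X Y => X.iso Y ∨ Step Rules X Y) G H

/-- A graph is provable in a system if there is a derivation from `∅` to it. -/
def Provable (Rules : LGraph → LGraph → Prop) (G : LGraph) : Prop :=
  Deriv Rules LGraph.empty G

/-- Formulas: unit, positive and negative atoms, par and tensor. -/
inductive Formula where
  | unit : Formula
  | pos (a : ℕ) : Formula
  | neg (a : ℕ) : Formula
  | par (φ ψ : Formula) : Formula
  | tens (φ ψ : Formula) : Formula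

/-- The graph `[φ]` of a formula `φ`. -/
def Formula.graph : Formula → LGraph
  | .unit => LGraph.empty
  | .pos a => single (a, true)
  | .neg a => single (a, false)
  | .par φ ψ => φ.graph.par ψ.graph
  | .tens φ ψ => φ.graph.tensor ψ.graph

/-- Structural equivalence of formulas: the smallest congruence making `⅋` and `⊗`
associative and commutative with unit `∘`. -/
inductive Formula.equiv : Formula → Formula → Prop
  | refl (φ) : Formula.equiv φ φ
  | symm {φ ψ} : Formula.equiv φ ψ → Formula.equiv ψ φ
  | trans {φ ψ χ} : Formula.equiv φ ψ → Formula.equiv ψ χ → Formula.equiv φ χ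
  | parComm (φ ψ) : Formula.equiv (.par φ ψ) (.par ψ φ)
  | parAssoc (φ ψ χ) : Formula.equiv (.par φ (.par ψ χ)) (.par (.par φ ψ) χ)
  | parUnit (φ) : Formula.equiv (.par φ .unit) φ
  | tensComm (φ ψ) : Formula.equiv (.tens φ ψ) (.tens ψ φ)
  | tensAssoc (φ ψ χ) : Formula.equiv (.tens φ (.tens ψ χ)) (.tens (.tens φ ψ) χ)
  | tensUnit (φ) : Formula.equiv (.tens φ .unit) φ
  | parCongr {φ φ' ψ ψ'} : Formula.equiv φ φ' → Formula.equiv ψ ψ' →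
      Formula.equiv (.par φ ψ) (.par φ' ψ')
  | tensCongr {φ φ' ψ ψ'} : Formula.equiv φ φ' → Formula.equiv ψ ψ' →
      Formula.equiv (.tens φ ψ) (.tens φ' ψ')

/-- A formula is unit-free if it contains no occurrence of the unit `∘`. -/
def Formula.UnitFree : Formula → Prop
  | .unit => False
  | .pos _ => True
  | .neg _ => True
  | .par φ ψ => φ.UnitFree ∧ ψ.UnitFree
  | .tens φ ψ => φ.UnitFree ∧ ψ.UnitFree

/-- The sequent calculus MLL° (multiplicative linear logic with mix) on multisets
of formulas. -/
inductive MLL : Multiset Formula → Prop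
  | ax (a : ℕ) : MLL {Formula.pos a, Formula.neg a}
  | tens {Γ Δ : Multiset Formula} (φ ψ : Formula) :
      MLL (φ ::ₘ Γ) → MLL (ψ ::ₘ Δ) → MLL (Formula.tens φ ψ ::ₘ (Γ + Δ))
  | par {Γ : Multiset Formula} (φ ψ : Formula) :
      MLL (φ ::ₘ ψ ::ₘ Γ) → MLL (Formula.par φ ψ ::ₘ Γ)
  | mix {Γ Δ : Multiset Formula} : MLL Γ → MLL Δ → MLL (Γ + Δ)

/-!
Induction on the number of vertices of `G`, following its modular decomposition. A vertex
whose block `Mᵢ` is empty (hence `Nᵢ` too) can be deleted. If `G` has a module `W` with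
`1 < |W| < |V(G)|`, then `G⟨M⟩` is the composition of the quotient `G/W` (one vertex standing
for `W`) with `W⟨M⟩` in the block of that vertex, and similarly for `Ḡ⟨N⟩`; the derivation for
`W` followed by the one for `G/W` gives the derivation for `G`. Otherwise `G` has at most two
vertices, where at most two switches (`ss↓`) suffice, or `G` is prime with at least four
vertices (every graph on three vertices has a nontrivial module); then `Ḡ` is prime too and a
single `p↓` step with `P = Ḡ` is the derivation.

Duality turns a GS step from `X` to `Y` into an `ai↑`, `ss↑` or `p↑` step from `Ȳ` to `X̄`, so
the second derivation is the first one, for `Ḡ` and dualized blocks, read backwards.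
-/

namespace LGraph

-- The isomorphisms below are built from the vertex types `⊕` and `Σ` these unfold to.
attribute [reducible] par tensor plug dual comp

def Iso.refl (G : LGraph) : Iso G G := ⟨Equiv.refl _, fun _ _ => Iff.rfl, fun _ => rfl⟩

def Iso.symm {G H : LGraph} (i : Iso G H) : Iso H G where
  toEquiv := i.toEquiv.symm
  adj_iff v w := by rw [i.adj_iff]; simp
  label_eq v := by simpa using (i.label_eq (i.toEquiv.symm v)).symm

def Iso.trans {G H K : LGraph} (i : Iso G H) (j : Iso H K) : Iso G K where
  toEquiv := i.toEquiv.trans j.toEquiv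
  adj_iff v w := (i.adj_iff v w).trans (j.adj_iff _ _)
  label_eq v := (j.label_eq (i.toEquiv v)).trans (i.label_eq v)

theorem iso_refl (G : LGraph) : iso G G := ⟨Iso.refl G⟩

theorem iso.symm {G H : LGraph} (h : iso G H) : iso H G := h.elim fun i => ⟨i.symm⟩

theorem iso.trans {G H K : LGraph} (h : iso G H) (h' : iso H K) : iso G K :=
  h.elim fun i => h'.elim fun j => ⟨i.trans j⟩

theorem iso_of_isEmpty {G H : LGraph} (hG : IsEmpty G.V) (hH : IsEmpty H.V) : iso G H :=
  ⟨⟨Equiv.equivOfIsEmpty _ _, fun v => hG.elim v, fun v => hG.elim v⟩⟩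

instance : IsEmpty empty.V := inferInstanceAs (IsEmpty Empty)

def parCongr {A A' B B' : LGraph} (i : Iso A A') (j : Iso B B') :
    Iso (A.par B) (A'.par B') where
  toEquiv := Equiv.sumCongr i.toEquiv j.toEquiv
  adj_iff v w := by
    rcases v with a | b <;> rcases w with a' | b' <;> simp [parAdj, i.adj_iff, j.adj_iff]
  label_eq v := by rcases v with a | b <;> simp [i.label_eq, j.label_eq]

def tensorCongr {A A' B B' : LGraph} (i : Iso A A') (j : Iso B B') :
    Iso (A.tensor B) (A'.tensor B') where
  toEquiv := Equiv.sumCongr i.toEquiv j.toEquiv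
  adj_iff v w := by
    rcases v with a | b <;> rcases w with a' | b' <;> simp [tensorAdj, i.adj_iff, j.adj_iff]
  label_eq v := by rcases v with a | b <;> simp [i.label_eq, j.label_eq]

def plugCongrRight (C : LGraph) (R : Set C.V) {X X' : LGraph} (j : Iso X X') :
    Iso (C.plug R X) (C.plug R X') where
  toEquiv := Equiv.sumCongr (Equiv.refl _) j.toEquiv
  adj_iff v w := by
    rcases v with a | b <;> rcases w with a' | b' <;> simp [plugAdj, j.adj_iff]
  label_eq v := by rcases v with a | b <;> simp [j.label_eq]

theorem iso_par {A A' B B' : LGraph} (h : iso A A') (h' : iso B B') :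
    iso (A.par B) (A'.par B') :=
  h.elim fun i => h'.elim fun j => ⟨parCongr i j⟩

theorem iso_tensor {A A' B B' : LGraph} (h : iso A A') (h' : iso B B') :
    iso (A.tensor B) (A'.tensor B') :=
  h.elim fun i => h'.elim fun j => ⟨tensorCongr i j⟩

theorem iso_plug_right (C : LGraph) (R : Set C.V) {X X' : LGraph} (h : iso X X') :
    iso (C.plug R X) (C.plug R X') :=
  h.elim fun j => ⟨plugCongrRight C R j⟩

def parComm (A B : LGraph) : Iso (A.par B) (B.par A) where
  toEquiv := Equiv.sumComm _ _
  adj_iff v w := by rcases v with a | b <;> rcases w with a' | b' <;> simp [parAdj]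
  label_eq v := by rcases v with a | b <;> simp

def tensorComm (A B : LGraph) : Iso (A.tensor B) (B.tensor A) where
  toEquiv := Equiv.sumComm _ _
  adj_iff v w := by rcases v with a | b <;> rcases w with a' | b' <;> simp [tensorAdj]
  label_eq v := by rcases v with a | b <;> simp

def parAssoc (A B C : LGraph) : Iso ((A.par B).par C) (A.par (B.par C)) where
  toEquiv := Equiv.sumAssoc _ _ _
  adj_iff v w := by
    rcases v with (a | b) | c <;> rcases w with (a' | b') | c' <;> simp [parAdj]
  label_eq v := by rcases v with (a | b) | c <;> simp

def tensorAssoc (A B C : LGraph) : Iso ((A.tensor B).tensor C) (A.tensor (B.tensor C)) where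
  toEquiv := Equiv.sumAssoc _ _ _
  adj_iff v w := by
    rcases v with (a | b) | c <;> rcases w with (a' | b') | c' <;> simp [tensorAdj]
  label_eq v := by rcases v with (a | b) | c <;> simp

def parEmpty (A B : LGraph) [IsEmpty B.V] : Iso (A.par B) A where
  toEquiv := Equiv.sumEmpty _ _
  adj_iff v w := by
    rcases v with a | b
    · rcases w with a' | b'
      · rfl
      · exact isEmptyElim b'
    · exact isEmptyElim b
  label_eq v := by
    rcases v with a | b
    · rfl
    · exact isEmptyElim b

def tensorEmpty (A B : LGraph) [IsEmpty B.V] : Iso (A.tensor B) A where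
  toEquiv := Equiv.sumEmpty _ _
  adj_iff v w := by
    rcases v with a | b
    · rcases w with a' | b'
      · rfl
      · exact isEmptyElim b'
    · exact isEmptyElim b
  label_eq v := by
    rcases v with a | b
    · rfl
    · exact isEmptyElim b

def plugEmpty (C X : LGraph) : Iso (C.plug ∅ X) (C.par X) where
  toEquiv := Equiv.refl _
  adj_iff v w := by rcases v with a | b <;> rcases w with a' | b' <;> simp [plugAdj, parAdj]
  label_eq v := rfl

def plugUniv (C X : LGraph) : Iso (C.plug Set.univ X) (C.tensor X) where
  toEquiv := Equiv.refl _
  adj_iff v w := by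
    rcases v with a | b <;> rcases w with a' | b' <;> simp [plugAdj, tensorAdj]
  label_eq v := rfl

def emptyPlug (R : Set empty.V) (X : LGraph) : Iso (empty.plug R X) X where
  toEquiv := Equiv.emptySum _ _
  adj_iff v w := by
    rcases v with a | b
    · exact isEmptyElim a
    · rcases w with a' | b'
      · exact isEmptyElim a'
      · rfl
  label_eq v := by
    rcases v with a | b
    · exact isEmptyElim a
    · rfl

def plugAssoc (C C' Y : LGraph) (S : Set C.V) (R : Set C'.V) :
    Iso (C.plug S (C'.plug R Y)) ((C.plug S C').plug {z | Sum.elim (· ∈ S) (· ∈ R) z} Y) where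
  toEquiv := (Equiv.sumAssoc _ _ _).symm
  adj_iff v w := by
    rcases v with a | b | c <;> rcases w with a' | b' | c' <;> simp [plugAdj]
  label_eq v := by rcases v with a | b | c <;> simp

theorem iso_dual {G H : LGraph} (h : iso G H) : iso G.dual H.dual :=
  h.elim fun i => ⟨{
    toEquiv := i.toEquiv
    adj_iff := fun v w => by simp [i.adj_iff]
    label_eq := fun v => by simp [i.label_eq] }⟩

def dualDual (G : LGraph) : Iso G.dual.dual G where
  toEquiv := Equiv.refl _
  adj_iff v w := by
    by_cases h : v = w
    · subst h; simpa using G.irrefl v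
    · simp [h]
  label_eq v := by simp [dualAtom]

def dualPar (A B : LGraph) : Iso (A.par B).dual (A.dual.tensor B.dual) where
  toEquiv := Equiv.refl _
  adj_iff v w := by rcases v with a | b <;> rcases w with a' | b' <;> simp [parAdj, tensorAdj]
  label_eq v := by rcases v with a | b <;> rfl

def dualTensor (A B : LGraph) : Iso (A.tensor B).dual (A.dual.par B.dual) where
  toEquiv := Equiv.refl _
  adj_iff v w := by rcases v with a | b <;> rcases w with a' | b' <;> simp [parAdj, tensorAdj]
  label_eq v := by rcases v with a | b <;> rfl

def dualPlug (C X : LGraph) (R : Set C.V) : Iso (C.plug R X).dual (C.dual.plug Rᶜ X.dual) where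
  toEquiv := Equiv.refl _
  adj_iff v w := by rcases v with a | b <;> rcases w with a' | b' <;> simp [plugAdj]
  label_eq v := by rcases v with a | b <;> rfl

def dualSingle (a : Atom) : Iso (single a).dual (single (dualAtom a)) where
  toEquiv := Equiv.refl _
  adj_iff _ _ := ⟨fun h => (h.1 rfl).elim, False.elim⟩
  label_eq _ := rfl

def dualEmpty : Iso empty.dual empty :=
  ⟨Equiv.refl _, fun v => isEmptyElim v, fun v => isEmptyElim v⟩

section Comp

variable {G : LGraph} {H : G.V → LGraph}

theorem compAdj_mk_same {v : G.V} {a b : (H v).V} :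
    compAdj G H ⟨v, a⟩ ⟨v, b⟩ ↔ (H v).adj a b := by
  constructor
  · rintro (⟨u, x, y, hx, hy, hxy⟩ | ⟨hne, _⟩)
    · obtain ⟨rfl, hax⟩ := Sigma.mk.inj_iff.mp hx
      obtain ⟨-, hby⟩ := Sigma.mk.inj_iff.mp hy
      cases eq_of_heq hax
      cases eq_of_heq hby
      exact hxy
    · exact absurd rfl hne
  · exact fun h => Or.inl ⟨v, a, b, rfl, rfl, h⟩

theorem compAdj_mk_ne {v w : G.V} {a : (H v).V} {b : (H w).V} (hne : v ≠ w) :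
    compAdj G H ⟨v, a⟩ ⟨w, b⟩ ↔ G.adj v w := by
  constructor
  · rintro (⟨u, x, y, hx, hy, -⟩ | ⟨-, h⟩)
    · cases (Sigma.mk.inj_iff.mp hx).1
      cases (Sigma.mk.inj_iff.mp hy).1
      exact absurd rfl hne
    · exact h
  · exact fun h => Or.inr ⟨hne, h⟩

end Comp

def compCongr {G G' : LGraph} {H : G.V → LGraph} {H' : G'.V → LGraph}
    (i : Iso G G') (F : ∀ v, Iso (H v) (H' (i.toEquiv v))) : Iso (G.comp H) (G'.comp H') where
  toEquiv := Equiv.sigmaCongr i.toEquiv fun v => (F v).toEquiv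
  adj_iff := by
    rintro ⟨v, a⟩ ⟨w, b⟩
    show compAdj G H _ _ ↔
      compAdj G' H' ⟨i.toEquiv v, (F v).toEquiv a⟩ ⟨i.toEquiv w, (F w).toEquiv b⟩
    by_cases hvw : v = w
    · subst hvw
      rw [compAdj_mk_same, compAdj_mk_same, (F v).adj_iff]
    · rw [compAdj_mk_ne hvw, compAdj_mk_ne (i.toEquiv.injective.ne hvw), i.adj_iff]
  label_eq := by
    rintro ⟨v, a⟩
    exact (F v).label_eq a

theorem iso_comp {G G' : LGraph} {H : G.V → LGraph} {H' : G'.V → LGraph}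
    (i : Iso G G') (F : ∀ v, iso (H v) (H' (i.toEquiv v))) : iso (G.comp H) (G'.comp H') :=
  ⟨compCongr i fun v => (F v).some⟩

def dualComp (G : LGraph) (H : G.V → LGraph) :
    Iso (G.comp H).dual (G.dual.comp fun v => (H v).dual) where
  toEquiv := Equiv.refl _
  adj_iff := by
    rintro ⟨v, a⟩ ⟨w, b⟩
    show _ ∧ ¬ compAdj G H ⟨v, a⟩ ⟨w, b⟩ ↔ compAdj G.dual (fun v => (H v).dual) ⟨v, a⟩ ⟨w, b⟩
    by_cases hvw : v = w
    · subst hvw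
      rw [compAdj_mk_same, compAdj_mk_same (G := G.dual) (H := fun v => (H v).dual)]
      simp
    · rw [compAdj_mk_ne hvw, compAdj_mk_ne (G := G.dual) (H := fun v => (H v).dual) hvw]
      simp [hvw]
  label_eq _ := rfl

theorem iso_dual_comp_dual (G : LGraph) (H : G.V → LGraph) :
    iso (G.dual.comp fun v => (H v).dual).dual (G.comp H) :=
  iso.trans ⟨dualComp _ _⟩ (iso_comp (dualDual G) fun v => ⟨dualDual (H v)⟩)

def compUnique (G : LGraph) [Unique G.V] (H : G.V → LGraph) : Iso (G.comp H) (H default) where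
  toEquiv := Equiv.uniqueSigma _
  adj_iff := by
    rintro ⟨v, a⟩ ⟨w, b⟩
    cases Unique.eq_default v
    cases Unique.eq_default w
    exact compAdj_mk_same
  label_eq := by
    rintro ⟨v, a⟩
    cases Unique.eq_default v
    rfl

noncomputable def induce (G : LGraph) (s : Set G.V) : LGraph where
  V := s
  fintype := Fintype.ofFinite s
  adj x y := G.adj x y
  symm h := G.symm h
  irrefl x := G.irrefl x
  label x := G.label x

def dualInduce (G : LGraph) (s : Set G.V) : Iso (G.induce s).dual (G.dual.induce s) where
  toEquiv := Equiv.refl _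
  adj_iff _ _ := and_congr_left' Subtype.val_injective.ne_iff.symm
  label_eq _ := rfl

def compInduce (G : LGraph) (s : Set G.V) (H : G.V → LGraph)
    (hH : ∀ v ∉ s, IsEmpty (H v).V) : Iso ((G.induce s).comp fun x => H x.1) (G.comp H) where
  toEquiv :=
    { toFun := fun x => ⟨x.1.1, x.2⟩
      invFun := fun x => ⟨⟨x.1, by_contra fun hx => (hH _ hx).false x.2⟩, x.2⟩
      left_inv := fun _ => rfl
      right_inv := fun _ => rfl }
  adj_iff := by
    rintro ⟨v, a⟩ ⟨w, b⟩
    show compAdj _ _ _ _ ↔ compAdj G H ⟨v.val, a⟩ ⟨w.val, b⟩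
    by_cases hvw : v = w
    · subst hvw
      rw [compAdj_mk_same, compAdj_mk_same]
    · rw [compAdj_mk_ne hvw, compAdj_mk_ne (Subtype.val_injective.ne hvw)]
      rfl
  label_eq _ := rfl

section Pair

variable (K : LGraph) {u v : K.V} (huv : u ≠ v) (hall : ∀ w, w = u ∨ w = v) (H : K.V → LGraph)

open Classical in
noncomputable def pairEquiv : (H u).V ⊕ (H v).V ≃ (Σ w, (H w).V) where
  toFun := Sum.elim (fun a => ⟨u, a⟩) (fun b => ⟨v, b⟩)
  invFun x := if h : x.1 = u then .inl (h ▸ x.2) else .inr ((hall x.1).resolve_left h ▸ x.2)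
  left_inv := by
    rintro (a | b)
    · simp
    · simp [Ne.symm huv]
  right_inv := by
    rintro ⟨w, a⟩
    rcases hall w with rfl | rfl
    · simp
    · simp [Ne.symm huv]

noncomputable def tensorIsoComp (hadj : K.adj u v) : Iso ((H u).tensor (H v)) (K.comp H) where
  toEquiv := pairEquiv K huv hall H
  adj_iff := by
    rintro (a | b) (a' | b')
    · exact compAdj_mk_same.symm
    · exact iff_of_true trivial ((compAdj_mk_ne huv).mpr hadj)
    · exact iff_of_true trivial ((compAdj_mk_ne huv.symm).mpr (K.symm hadj))
    · exact compAdj_mk_same.symm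
  label_eq v := by rcases v with a | b <;> rfl

noncomputable def parIsoComp (hadj : ¬ K.adj u v) : Iso ((H u).par (H v)) (K.comp H) where
  toEquiv := pairEquiv K huv hall H
  adj_iff := by
    rintro (a | b) (a' | b')
    · exact compAdj_mk_same.symm
    · exact iff_of_false id fun h => hadj ((compAdj_mk_ne huv).mp h)
    · exact iff_of_false id fun h => hadj (K.symm ((compAdj_mk_ne huv.symm).mp h))
    · exact compAdj_mk_same.symm
  label_eq v := by rcases v with a | b <;> rfl

end Pair

def tensorParIsoPlug (A B C : LGraph) :
    Iso (A.tensor (B.par C)) ((A.tensor B).plug {z | z.isLeft} C) where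
  toEquiv := (Equiv.sumAssoc _ _ _).symm
  adj_iff v w := by
    rcases v with a | b | c <;> rcases w with a' | b' | c' <;> simp [tensorAdj, parAdj, plugAdj]
  label_eq v := by rcases v with a | b | c <;> rfl

/-- The vertex standing for `W` carries the label of `x₀`, so that the quotient of `Ḡ` is the
dual of the quotient of `G`. -/
noncomputable abbrev quotient (G : LGraph) (W : Set G.V) (x₀ : G.V) : LGraph :=
  (G.induce Wᶜ).plug {c | G.adj c.1 x₀} (single (G.label x₀))

open Classical in
noncomputable def compQuotient (G : LGraph) {W : Set G.V} (hW : G.IsModule W) {x₀ : G.V}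
    (hx₀ : x₀ ∈ W) (H : G.V → LGraph) :
    Iso ((G.quotient W x₀).comp
        (Sum.elim (fun c => H c.1) fun _ => (G.induce W).comp fun x => H x.1))
      (G.comp H) where
  toEquiv :=
    { toFun := fun
        | ⟨.inl c, a⟩ => ⟨c.1, a⟩
        | ⟨.inr _, ⟨x, a⟩⟩ => ⟨x.1, a⟩
      invFun := fun p =>
        if h : p.1 ∈ W then ⟨.inr (), ⟨⟨p.1, h⟩, p.2⟩⟩ else ⟨.inl ⟨p.1, h⟩, p.2⟩
      left_inv := by
        rintro ⟨c | u, a⟩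
        · exact dif_neg c.2
        · exact dif_pos a.1.2
      right_inv := by
        rintro ⟨v, a⟩
        by_cases h : v ∈ W <;> simp [h] }
  adj_iff := by
    rintro ⟨c | u, a⟩ ⟨c' | u', b⟩
    · by_cases hcc : c = c'
      · subst hcc
        exact compAdj_mk_same.trans compAdj_mk_same.symm
      · exact (compAdj_mk_ne (Sum.inl_injective.ne hcc)).trans
          (compAdj_mk_ne (Subtype.val_injective.ne hcc)).symm
    · exact (compAdj_mk_ne Sum.inl_ne_inr).trans <| (hW c.1 c.2 x₀ hx₀ b.1.1 b.1.2).trans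
        (compAdj_mk_ne (ne_of_mem_of_not_mem b.1.2 c.2).symm).symm
    · exact (compAdj_mk_ne Sum.inr_ne_inl).trans <|
        ((hW c'.1 c'.2 x₀ hx₀ a.1.1 a.1.2).trans ⟨G.symm, G.symm⟩).trans
        (compAdj_mk_ne (ne_of_mem_of_not_mem a.1.2 c'.2)).symm
    · refine compAdj_mk_same.trans ?_
      by_cases hxx : a.1 = b.1
      · obtain ⟨x, a⟩ := a
        obtain ⟨x', b⟩ := b
        cases hxx
        exact compAdj_mk_same.trans compAdj_mk_same.symm
      · exact (compAdj_mk_ne hxx).trans (compAdj_mk_ne (Subtype.val_injective.ne hxx)).symm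
  label_eq := by rintro ⟨c | u, a⟩ <;> rfl

theorem isModule_dual_iff {G : LGraph} {W : Set G.V} : G.dual.IsModule W ↔ G.IsModule W := by
  refine forall₂_congr fun v hv => forall₂_congr fun x hx => forall₂_congr fun y hy => ?_
  have hvx : v ≠ x := fun h => hv (h ▸ hx)
  have hvy : v ≠ y := fun h => hv (h ▸ hy)
  simp [hvx, hvy, not_iff_not]

def dualQuotient (G : LGraph) {W : Set G.V} {x₀ : G.V} (hx₀ : x₀ ∈ W) :
    Iso (G.quotient W x₀).dual (G.dual.quotient W x₀) where
  toEquiv := Equiv.refl _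
  adj_iff := by
    have hne : ∀ c : (G.induce Wᶜ).V, c.1 ≠ x₀ := fun c h => c.2 (h ▸ hx₀)
    intro v w
    show _ ↔ (G.dual.quotient W x₀).adj v w
    rcases v with c | u <;> rcases w with c' | u'
    · exact and_congr_left' (Sum.inl_injective.ne_iff.trans Subtype.val_injective.ne_iff.symm)
    · exact ⟨fun h => ⟨hne c, h.2⟩, fun h => ⟨Sum.inl_ne_inr, h.2⟩⟩
    · exact ⟨fun h => ⟨hne c', h.2⟩, fun h => ⟨Sum.inr_ne_inl, h.2⟩⟩
    · exact ⟨fun h => h.1 rfl, False.elim⟩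
  label_eq v := by rcases v with c | u <;> rfl

theorem prime_dual {G : LGraph} (hP : G.Prime) : G.dual.Prime :=
  ⟨hP.1, fun W hW => hP.2 W (isModule_dual_iff.mp hW)⟩

theorem iso_dual_comp_quotient (G : LGraph) {W : Set G.V} (hW : G.IsModule W) {x₀ : G.V}
    (hx₀ : x₀ ∈ W) (H : G.V → LGraph) :
    iso ((G.quotient W x₀).dual.comp
        (Sum.elim (fun c => H c.1) fun _ => (G.induce W).dual.comp fun x => H x.1))
      (G.dual.comp H) := by
  refine iso.trans (iso_comp (dualQuotient G hx₀) ?_)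
    ⟨compQuotient G.dual (isModule_dual_iff.mpr hW) hx₀ H⟩
  rintro (c | u)
  · exact iso_refl _
  · exact iso_comp (dualInduce G W) fun _ => iso_refl _

theorem card_induce (G : LGraph) (s : Set G.V) : Fintype.card (G.induce s).V = s.ncard := by
  rw [← Nat.card_eq_fintype_card]
  rfl

theorem card_induce_lt {G : LGraph} {s : Set G.V} (hs : s ≠ Set.univ) :
    Fintype.card (G.induce s).V < Fintype.card G.V := by
  rw [card_induce, ← Nat.card_eq_fintype_card]
  exact Set.ncard_lt_card hs

theorem card_quotient_lt {G : LGraph} {W : Set G.V} (hW : W.Nontrivial) (x₀ : G.V) :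
    Fintype.card (G.quotient W x₀).V < Fintype.card G.V := by
  have hcard : W.ncard + Wᶜ.ncard = Fintype.card G.V := by
    rw [Set.ncard_add_ncard_compl, Nat.card_eq_fintype_card]
  have hW2 : 1 < W.ncard := Set.one_lt_ncard_iff_nontrivial.mpr hW
  rw [Fintype.card_sum, card_induce]
  change _ + 1 < _
  omega

theorem prod_induce {M : Type*} [CommMonoid M] (G : LGraph) (s : Set G.V) {p : G.V → Prop}
    [Fintype {x // p x}] (h : ∀ x, x ∈ s ↔ p x) (f : G.V → M) :
    ∏ x : (G.induce s).V, f x.1 = ∏ x : {x // p x}, f x.1 :=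
  Fintype.prod_equiv (ι := (G.induce s).V) (Equiv.subtypeEquivRight h) _ _ fun _ => rfl

def IsNontrivialModule (G : LGraph) (W : Set G.V) : Prop :=
  G.IsModule W ∧ W.Nontrivial ∧ W ≠ Set.univ

theorem prime_of_forall_not_isNontrivialModule {G : LGraph} (h2 : 2 ≤ Fintype.card G.V)
    (h : ∀ W, ¬ G.IsNontrivialModule W) : G.Prime := by
  refine ⟨h2, fun W hW => ?_⟩
  by_cases hWnt : W.Nontrivial
  · exact Or.inr (Or.inr (by_contra fun hWu => h W ⟨hW, hWnt, hWu⟩))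
  · rcases (Set.not_nontrivial_iff.mp hWnt).eq_empty_or_singleton with hWe | hWs
    exacts [Or.inl hWe, Or.inr (Or.inl hWs)]

theorem isNontrivialModule_pair {G : LGraph} {u v w : G.V} (huv : u ≠ v) (hwu : w ≠ u)
    (hwv : w ≠ v) (hall : ∀ z, z = u ∨ z = v ∨ z = w) (h : G.adj w u ↔ G.adj w v) :
    G.IsNontrivialModule {u, v} := by
  refine ⟨?_, Set.nontrivial_pair huv, fun huniv => ?_⟩
  · intro z hz x hx y hy
    obtain rfl : z = w := by
      rcases hall z with rfl | rfl | rfl <;> simp_all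
    rcases hx with rfl | rfl <;> rcases hy with rfl | rfl <;> tauto
  · have hw : w ∈ ({u, v} : Set G.V) := huniv ▸ Set.mem_univ w
    rcases hw with rfl | rfl <;> contradiction

theorem exists_isNontrivialModule_of_card_eq_three {G : LGraph} (h3 : Fintype.card G.V = 3) :
    ∃ W, G.IsNontrivialModule W := by
  classical
  obtain ⟨x, y, z, hxy, hxz, hyz, huniv⟩ := Finset.card_eq_three.mp (Finset.card_univ.trans h3)
  have hall : ∀ v, v = x ∨ v = y ∨ v = z := fun v => by
    simpa [huniv] using Finset.mem_univ v
  have hsymm : ∀ a b, G.adj a b ↔ G.adj b a := fun _ _ => ⟨G.symm, G.symm⟩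
  by_cases hz : G.adj z x ↔ G.adj z y
  · exact ⟨_, isNontrivialModule_pair hxy hxz.symm hyz.symm hall hz⟩
  by_cases hy : G.adj y x ↔ G.adj y z
  · refine ⟨_, isNontrivialModule_pair hxz hxy.symm hyz (fun v => ?_) hy⟩
    rcases hall v with h | h | h <;> simp [h]
  · have hx : G.adj x y ↔ G.adj x z := by
      have := hsymm x y; have := hsymm x z; have := hsymm y z
      tauto
    refine ⟨_, isNontrivialModule_pair hyz hxy hxz (fun v => ?_) hx⟩
    rcases hall v with h | h | h <;> simp [h]

end LGraph

instance isoSetoid : Setoid LGraph where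
  r := iso
  iseqv := ⟨iso_refl, iso.symm, iso.trans⟩

/-- Under `⊗`, isomorphism classes form a commutative monoid, in which tensors of the same blocks
in different orders and bracketings become equal products. -/
def IsoClass := Quotient isoSetoid

def IsoClass.mk (G : LGraph) : IsoClass := Quotient.mk isoSetoid G

notation "⟦" G "⟧ᵢ" => IsoClass.mk G

theorem IsoClass.mk_eq_mk {G H : LGraph} : ⟦G⟧ᵢ = ⟦H⟧ᵢ ↔ iso G H :=
  ⟨Quotient.exact, fun h => Quotient.sound h⟩

instance : CommMonoid IsoClass where
  mul := Quotient.map₂ tensor fun _ _ h _ _ h' => iso_tensor h h'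
  one := ⟦empty⟧ᵢ
  mul_assoc a b c := by
    induction a using Quotient.inductionOn
    induction b using Quotient.inductionOn
    induction c using Quotient.inductionOn
    exact Quotient.sound ⟨tensorAssoc _ _ _⟩
  one_mul a := by
    induction a using Quotient.inductionOn
    exact Quotient.sound (iso.trans ⟨tensorComm _ _⟩ ⟨tensorEmpty _ _⟩)
  mul_one a := by
    induction a using Quotient.inductionOn
    exact Quotient.sound ⟨tensorEmpty _ _⟩
  mul_comm a b := by
    induction a using Quotient.inductionOn
    induction b using Quotient.inductionOn
    exact Quotient.sound ⟨tensorComm _ _⟩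

theorem IsoClass.mk_tensor (G H : LGraph) : ⟦G.tensor H⟧ᵢ = ⟦G⟧ᵢ * ⟦H⟧ᵢ := rfl

theorem IsoClass.mk_eq_one {G : LGraph} (hG : IsEmpty G.V) : ⟦G⟧ᵢ = 1 :=
  Quotient.sound (iso_of_isEmpty hG inferInstance)

theorem IsoClass.mk_bigTensor (n : ℕ) (F : Fin n → LGraph) :
    ⟦bigTensor n F⟧ᵢ = ∏ i, ⟦F i⟧ᵢ := by
  induction n with
  | zero => rfl
  | succ n ih => rw [Fin.prod_univ_succ, ← ih]; rfl

noncomputable def tensorOver {ι : Type} [Fintype ι] (F : ι → LGraph) : LGraph :=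
  bigTensor _ fun i => F ((Fintype.equivFin ι).symm i)

theorem IsoClass.mk_tensorOver {ι : Type} [Fintype ι] (F : ι → LGraph) :
    ⟦tensorOver F⟧ᵢ = ∏ i, ⟦F i⟧ᵢ := by
  rw [tensorOver, IsoClass.mk_bigTensor]
  exact Fintype.prod_equiv _ _ _ fun _ => rfl

theorem iso_bigPar {n : ℕ} {F F' : Fin n → LGraph} (h : ∀ i, iso (F i) (F' i)) :
    iso (bigPar n F) (bigPar n F') := by
  induction n with
  | zero => exact iso_refl _
  | succ n ih => exact iso_par (h 0) (ih fun i => h i.succ)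

theorem iso_dual_bigTensor (n : ℕ) (F : Fin n → LGraph) :
    iso (bigTensor n F).dual (bigPar n fun i => (F i).dual) := by
  induction n with
  | zero => exact ⟨dualEmpty⟩
  | succ n ih => exact iso.trans ⟨dualTensor _ _⟩ (iso_par (iso_refl _) (ih _))

namespace Deriv

variable {Rules : LGraph → LGraph → Prop}

theorem refl (G : LGraph) : Deriv Rules G G := Relation.ReflTransGen.refl

theorem trans {G H K : LGraph} (h : Deriv Rules G H) (h' : Deriv Rules H K) :
    Deriv Rules G K :=
  Relation.ReflTransGen.trans h h'

theorem of_iso {G H : LGraph} (h : iso G H) : Deriv Rules G H :=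
  Relation.ReflTransGen.single (Or.inl h)

theorem of_rule {p c X Y : LGraph} (hr : Rules p c) (hX : iso X p) (hY : iso Y c) :
    Deriv Rules X Y :=
  Relation.ReflTransGen.single <| Or.inr
    ⟨empty, ∅, p, c, hr, hX.trans ⟨(emptyPlug _ _).symm⟩, hY.trans ⟨(emptyPlug _ _).symm⟩⟩

theorem plug (C : LGraph) (S : Set C.V) {p q : LGraph} (h : Deriv Rules p q) :
    Deriv Rules (C.plug S p) (C.plug S q) := by
  induction h with
  | refl => exact refl _
  | tail _ hpq ih =>
    refine ih.trans ?_
    rcases hpq with hiso | ⟨C', R, p', c', hr, hp, hc⟩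
    · exact of_iso (iso_plug_right C S hiso)
    · exact Relation.ReflTransGen.single <| Or.inr
        ⟨C.plug S C', _, p', c', hr, (iso_plug_right C S hp).trans ⟨plugAssoc _ _ _ _ _⟩,
          (iso_plug_right C S hc).trans ⟨plugAssoc _ _ _ _ _⟩⟩

theorem tensor_right (A : LGraph) {p q : LGraph} (h : Deriv Rules p q) :
    Deriv Rules (A.tensor p) (A.tensor q) :=
  (of_iso ⟨(plugUniv A p).symm⟩).trans ((h.plug A _).trans (of_iso ⟨plugUniv A q⟩))

theorem par_right (A : LGraph) {p q : LGraph} (h : Deriv Rules p q) :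
    Deriv Rules (A.par p) (A.par q) :=
  (of_iso ⟨(plugEmpty A p).symm⟩).trans ((h.plug A _).trans (of_iso ⟨plugEmpty A q⟩))

theorem par_left (A : LGraph) {p q : LGraph} (h : Deriv Rules p q) :
    Deriv Rules (p.par A) (q.par A) :=
  (of_iso ⟨parComm _ _⟩).trans ((h.par_right A).trans (of_iso ⟨parComm _ _⟩))

end Deriv

theorem GSRule.exists_dual {p c : LGraph} (h : GSRule p c) :
    ∃ p' c', UpRule p' c' ∧ iso c.dual p' ∧ iso p.dual c' := by
  cases h with
  | ai a =>
    refine ⟨_, _, UpRule.ai a, iso.trans ⟨dualPar _ _⟩ (iso_tensor ?_ ⟨dualSingle a⟩), ⟨dualEmpty⟩⟩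
    have h : iso (single (dualAtom a)).dual (single (dualAtom (dualAtom a))) := ⟨dualSingle _⟩
    rwa [show dualAtom (dualAtom a) = a by simp [dualAtom]] at h
  | ss A B S hA hS =>
    refine ⟨_, _, UpRule.ss A.dual B.dual Sᶜ hA ?_, ⟨dualPar _ _⟩, ⟨dualPlug _ _ _⟩⟩
    exact fun h => hS (Set.compl_univ_iff.mp h)
  | p n P e M N hP h4 hM =>
    refine ⟨_, _, UpRule.p n P e (fun i => (M i).dual) (fun i => (N i).dual) hP h4 hM, ?_, ?_⟩
    · refine iso.trans ⟨dualPar _ _⟩ (iso_tensor ?_ ⟨dualComp _ _⟩)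
      exact iso.trans ⟨dualComp _ _⟩ (iso_comp (dualDual P) fun _ => iso_refl _)
    · exact iso.trans (iso_dual_bigTensor _ _) (iso_bigPar fun _ => ⟨dualPar _ _⟩)

theorem Deriv.dual {A B : LGraph} (h : Deriv GSRule A B) : Deriv UpRule B.dual A.dual := by
  induction h with
  | refl => exact Deriv.refl _
  | tail _ hstep ih =>
    refine Relation.ReflTransGen.head ?_ ih
    rcases hstep with hiso | ⟨C, R, p, c, hr, hp, hc⟩
    · exact Or.inl (iso_dual hiso.symm)
    · obtain ⟨p', c', hr', hcp, hpc⟩ := hr.exists_dual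
      exact Or.inr ⟨C.dual, Rᶜ, p', c', hr', (iso_dual hc).trans (iso.trans ⟨dualPlug _ _ _⟩
        (iso_plug_right _ _ hcp)), (iso_dual hp).trans (iso.trans ⟨dualPlug _ _ _⟩
        (iso_plug_right _ _ hpc))⟩

/-- An `ss↓` step, or an isomorphism when `A` or `C` is empty. -/
theorem deriv_switch (A B C : LGraph) :
    Deriv GSRule (A.tensor (B.par C)) ((A.tensor B).par C) := by
  by_cases hA : IsEmpty A.V
  · refine Deriv.of_iso (iso.trans ⟨tensorComm _ _⟩ (iso.trans ⟨tensorEmpty _ _⟩ ?_))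
    exact iso_par (iso.trans ⟨tensorComm _ _⟩ ⟨tensorEmpty _ _⟩).symm (iso_refl C)
  by_cases hC : IsEmpty C.V
  · exact Deriv.of_iso (iso.trans (iso_tensor (iso_refl A) ⟨parEmpty _ _⟩) ⟨(parEmpty _ _).symm⟩)
  obtain ⟨a⟩ := not_isEmpty_iff.mp hA
  refine Deriv.of_rule (GSRule.ss C (A.tensor B) _ (not_isEmpty_iff.mp hC) ?_)
    ⟨tensorParIsoPlug A B C⟩ (iso_refl _)
  exact Set.nonempty_iff_ne_empty.mp ⟨.inl a, rfl⟩

theorem deriv_tensor_par_tensor (M₁ N₁ M₂ N₂ : LGraph) :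
    Deriv GSRule ((M₁.par N₁).tensor (M₂.par N₂)) ((M₁.tensor M₂).par (N₁.par N₂)) :=
  ((deriv_switch _ M₂ N₂).trans (Deriv.of_iso (iso_par ⟨tensorComm _ _⟩ (iso_refl _)))).trans <|
    ((deriv_switch M₂ M₁ N₁).par_left N₂).trans <|
      Deriv.of_iso (iso.trans ⟨parAssoc _ _ _⟩ (iso_par ⟨tensorComm _ _⟩ (iso_refl _)))

theorem deriv_tensor_par_par (M₁ N₁ M₂ N₂ : LGraph) :
    Deriv GSRule ((M₁.par N₁).tensor (M₂.par N₂)) ((M₁.par M₂).par (N₁.tensor N₂)) := by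
  refine (Deriv.of_iso (iso.trans ⟨tensorComm _ _⟩ (iso_tensor (iso_refl _) ⟨parComm _ _⟩))).trans
    ((deriv_switch _ N₁ M₁).trans ?_)
  refine (Deriv.of_iso (iso_par (iso.trans ⟨tensorComm _ _⟩
    (iso_tensor (iso_refl _) ⟨parComm _ _⟩)) (iso_refl _))).trans
    (((deriv_switch N₁ N₂ M₂).par_left M₁).trans (Deriv.of_iso ?_))
  exact iso.trans ⟨parComm _ _⟩ (iso.trans (iso_par (iso_refl _) ⟨parComm _ _⟩)
    ⟨(parAssoc _ _ _).symm⟩)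

theorem deriv_comp_pair (G : LGraph) {u v : G.V} (huv : u ≠ v) (hall : ∀ w, w = u ∨ w = v)
    (M N : G.V → LGraph) :
    Deriv GSRule (((M u).par (N u)).tensor ((M v).par (N v)))
      ((G.comp M).par (G.dual.comp N)) := by
  by_cases hadj : G.adj u v
  · exact (deriv_tensor_par_tensor _ _ _ _).trans <| Deriv.of_iso <| iso_par
      ⟨tensorIsoComp G huv hall M hadj⟩ ⟨parIsoComp G.dual huv hall N fun h => h.2 hadj⟩
  · exact (deriv_tensor_par_par _ _ _ _).trans <| Deriv.of_iso <| iso_par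
      ⟨parIsoComp G huv hall M hadj⟩ ⟨tensorIsoComp G.dual huv hall N ⟨huv, hadj⟩⟩

/-- `T` stands for any tensor of the blocks `M v ⅋ N v`, in any order and bracketing. -/
def CompDerivable (G : LGraph) : Prop :=
  ∀ M N : G.V → LGraph, (∀ v, IsEmpty (M v).V → IsEmpty (N v).V) →
    ∀ T : LGraph, ⟦T⟧ᵢ = ∏ v, ⟦(M v).par (N v)⟧ᵢ →
      Deriv GSRule T ((G.comp M).par (G.dual.comp N))

theorem compDerivable_of_isModule {G : LGraph} {W : Set G.V} (hW : G.IsModule W) {x₀ : G.V}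
    (hx₀ : x₀ ∈ W) (hX : CompDerivable (G.induce W)) (hQ : CompDerivable (G.quotient W x₀)) :
    CompDerivable G := by
  intro M N hMN T hT
  let TX := tensorOver fun x : (G.induce W).V => (M x.1).par (N x.1)
  let TC := tensorOver fun c : (G.induce Wᶜ).V => (M c.1).par (N c.1)
  have hsplit : iso T (TC.tensor TX) := by
    classical
    rw [← IsoClass.mk_eq_mk, hT, IsoClass.mk_tensor, IsoClass.mk_tensorOver,
      IsoClass.mk_tensorOver, mul_comm]
    exact (Fintype.prod_subtype_mul_prod_subtype (· ∈ W) _).symm.trans (congrArg₂ (· * ·)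
      (prod_induce G W (fun _ => Iff.rfl) fun v => ⟦(M v).par (N v)⟧ᵢ).symm
      (prod_induce G Wᶜ (fun _ => Iff.rfl) fun v => ⟦(M v).par (N v)⟧ᵢ).symm)
  have DX := hX (fun x => M x.1) (fun x => N x.1) (fun x => hMN x.1) TX (IsoClass.mk_tensorOver _)
  have DQ := hQ (Sum.elim (fun c => M c.1) fun _ => (G.induce W).comp fun x => M x.1)
    (Sum.elim (fun c => N c.1) fun _ => (G.induce W).dual.comp fun x => N x.1) ?_ (TC.tensor
      (((G.induce W).comp fun x => M x.1).par ((G.induce W).dual.comp fun x => N x.1))) ?_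
  · exact (Deriv.of_iso hsplit).trans <| (DX.tensor_right TC).trans <| DQ.trans <|
      Deriv.of_iso (iso_par ⟨compQuotient G hW hx₀ M⟩ (iso_dual_comp_quotient G hW hx₀ N))
  · rintro (c | u) hM
    · exact hMN c.1 hM
    · exact ⟨fun ⟨x, b⟩ => (hMN x.1 ⟨fun a => hM.false ⟨x, a⟩⟩).false b⟩
  · rw [IsoClass.mk_tensor, IsoClass.mk_tensorOver, Fintype.prod_sum_type]
    refine congrArg _ (Eq.symm ?_)
    exact Fintype.prod_unique (ι := Unit) _

theorem deriv_comp_of_isEmpty_block {G : LGraph} (v₀ : G.V) (hG : CompDerivable (G.induce {v₀}ᶜ))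
    {M N : G.V → LGraph} (hMN : ∀ v, IsEmpty (M v).V → IsEmpty (N v).V) (hM : IsEmpty (M v₀).V)
    {T : LGraph} (hT : ⟦T⟧ᵢ = ∏ v, ⟦(M v).par (N v)⟧ᵢ) :
    Deriv GSRule T ((G.comp M).par (G.dual.comp N)) := by
  have hM' : ∀ v ∉ ({v₀}ᶜ : Set G.V), IsEmpty (M v).V := fun v hv => by
    rwa [Set.notMem_compl_iff.mp hv]
  have hN' : ∀ v ∉ ({v₀}ᶜ : Set G.V), IsEmpty (N v).V := fun v hv => hMN v (hM' v hv)
  refine (hG (fun x => M x.1) (fun x => N x.1) (fun x => hMN x.1) T ?_).trans <| Deriv.of_iso <|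
    iso_par ⟨compInduce G _ M hM'⟩ <|
      (iso_comp (dualInduce G _) fun _ => iso_refl _).trans ⟨compInduce G.dual _ N hN'⟩
  classical
  rw [hT]
  exact (Finset.prod_congr_set _ _ (fun x : ({v₀}ᶜ : Set G.V) => ⟦(M x.1).par (N x.1)⟧ᵢ)
    (fun _ _ => rfl) fun v hv => IsoClass.mk_eq_one (isEmpty_sum.mpr ⟨hM' v hv, hN' v hv⟩)).trans
    (prod_induce G _ (fun _ => Iff.rfl) fun v => ⟦(M v).par (N v)⟧ᵢ).symm

theorem deriv_comp_of_isEmpty {G : LGraph} [IsEmpty G.V] (M N : G.V → LGraph) {T : LGraph}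
    (hT : ⟦T⟧ᵢ = ∏ v, ⟦(M v).par (N v)⟧ᵢ) : Deriv GSRule T ((G.comp M).par (G.dual.comp N)) := by
  rw [Finset.univ_eq_empty, Finset.prod_empty, ← IsoClass.mk_eq_one (G := empty) inferInstance,
    IsoClass.mk_eq_mk] at hT
  refine Deriv.of_iso (hT.trans (iso_of_isEmpty inferInstance ?_))
  exact isEmpty_sum.mpr ⟨⟨fun x => isEmptyElim x.1⟩, ⟨fun x => isEmptyElim x.1⟩⟩

theorem deriv_comp_of_unique {G : LGraph} [Unique G.V] (M N : G.V → LGraph) {T : LGraph}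
    (hT : ⟦T⟧ᵢ = ∏ v, ⟦(M v).par (N v)⟧ᵢ) : Deriv GSRule T ((G.comp M).par (G.dual.comp N)) := by
  rw [Fintype.prod_unique, IsoClass.mk_eq_mk] at hT
  exact Deriv.of_iso (hT.trans (iso_par ⟨compUnique G M⟩ ⟨compUnique G.dual N⟩).symm)

theorem deriv_comp_of_card_eq_two {G : LGraph} (h2 : Fintype.card G.V = 2) (M N : G.V → LGraph)
    {T : LGraph} (hT : ⟦T⟧ᵢ = ∏ v, ⟦(M v).par (N v)⟧ᵢ) :
    Deriv GSRule T ((G.comp M).par (G.dual.comp N)) := by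
  classical
  obtain ⟨u, v, huv, huniv⟩ := Finset.card_eq_two.mp (Finset.card_univ.trans h2)
  rw [huniv, Finset.prod_pair huv, ← IsoClass.mk_tensor, IsoClass.mk_eq_mk] at hT
  exact (Deriv.of_iso hT).trans
    (deriv_comp_pair G huv (fun w => by simpa [huniv] using Finset.mem_univ w) M N)

theorem deriv_comp_of_prime {G : LGraph} (hP : G.Prime) (h4 : 4 ≤ Fintype.card G.V)
    {M N : G.V → LGraph} (hM : ∀ v, Nonempty (M v).V) {T : LGraph}
    (hT : ⟦T⟧ᵢ = ∏ v, ⟦(M v).par (N v)⟧ᵢ) : Deriv GSRule T ((G.comp M).par (G.dual.comp N)) := by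
  let e := Fintype.equivFin G.V
  refine Deriv.of_rule (GSRule.p _ G.dual e (fun i => M (e.symm i)) (fun i => N (e.symm i))
    (prime_dual hP) h4 fun _ => hM _) ?_ ?_
  · rw [← IsoClass.mk_eq_mk, hT, IsoClass.mk_bigTensor]
    exact Fintype.prod_equiv e _ _ fun v => by simp
  · refine iso_par (iso_comp (dualDual G).symm fun v => ?_) (iso_comp (Iso.refl _) fun v => ?_)
    · exact (e.symm_apply_apply v).symm ▸ iso_refl (M v)
    · exact (e.symm_apply_apply v).symm ▸ iso_refl (N v)

theorem deriv_comp_of_forall_not_isNontrivialModule {G : LGraph}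
    (hG : ∀ W, ¬ G.IsNontrivialModule W) {M N : G.V → LGraph} (hM : ∀ v, Nonempty (M v).V)
    {T : LGraph} (hT : ⟦T⟧ᵢ = ∏ v, ⟦(M v).par (N v)⟧ᵢ) :
    Deriv GSRule T ((G.comp M).par (G.dual.comp N)) := by
  rcases Nat.lt_or_ge (Fintype.card G.V) 4 with hlt | h4
  · interval_cases hn : Fintype.card G.V
    · have := Fintype.card_eq_zero_iff.mp hn
      exact deriv_comp_of_isEmpty M N hT
    · have := (Fintype.card_eq_one_iff_nonempty_unique.mp hn).some
      exact deriv_comp_of_unique M N hT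
    · exact deriv_comp_of_card_eq_two hn M N hT
    · exact absurd (exists_isNontrivialModule_of_card_eq_three hn) (not_exists.mpr hG)
  · exact deriv_comp_of_prime (prime_of_forall_not_isNontrivialModule (by omega) hG) h4 hM hT

theorem compDerivable (G : LGraph) : CompDerivable G := by
  induction hn : Fintype.card G.V using Nat.strong_induction_on generalizing G with
  | _ n ih =>
  have IH : ∀ H : LGraph, Fintype.card H.V < Fintype.card G.V → CompDerivable H :=
    fun H h => ih _ (hn ▸ h) H rfl
  by_cases hmod : ∃ W, G.IsNontrivialModule W
  · obtain ⟨W, hW, hWnt, hWu⟩ := hmod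
    obtain ⟨x₀, hx₀⟩ := hWnt.nonempty
    exact compDerivable_of_isModule hW hx₀ (IH _ (card_induce_lt hWu))
      (IH _ (card_quotient_lt hWnt x₀))
  intro M N hMN T hT
  by_cases hempty : ∃ v₀, IsEmpty (M v₀).V
  · obtain ⟨v₀, hv₀⟩ := hempty
    refine deriv_comp_of_isEmpty_block v₀ (IH _ (card_induce_lt ?_)) hMN hv₀ hT
    exact Set.compl_ne_univ.mpr (Set.singleton_nonempty v₀)
  · push Not at hmod hempty
    exact deriv_comp_of_forall_not_isNontrivialModule hmod hempty hT

/-- Let `G` be a graph with vertices `v₁, …, vₙ` and let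
`M₁, …, Mₙ, N₁, …, Nₙ` be graphs such that `Mᵢ = ∅` implies `Nᵢ = ∅` for every `i`.
Then there is a GS derivation from `(M₁ ⅋ N₁) ⊗ ⋯ ⊗ (Mₙ ⅋ Nₙ)` to
`G⟨M₁, …, Mₙ⟩ ⅋ Ḡ⟨N₁, …, Nₙ⟩`, and dually a derivation using only `ai↑`, `ss↑`, `p↑`
from `G⟨M₁, …, Mₙ⟩ ⊗ Ḡ⟨N₁, …, Nₙ⟩` to `(M₁ ⊗ N₁) ⅋ ⋯ ⅋ (Mₙ ⊗ Nₙ)`. -/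
theorem lemma_g (n : ℕ) (G : LGraph) (e : G.V ≃ Fin n) (M N : Fin n → LGraph)
    (h : ∀ i, IsEmpty (M i).V → IsEmpty (N i).V) :
    Deriv GSRule (bigTensor n fun i => (M i).par (N i))
      ((G.comp fun v => M (e v)).par (G.dual.comp fun v => N (e v))) ∧
    Deriv UpRule ((G.comp fun v => M (e v)).tensor (G.dual.comp fun v => N (e v)))
      (bigPar n fun i => (M i).tensor (N i)) := by
  have hprod (F : Fin n → LGraph) : ⟦bigTensor n F⟧ᵢ = ∏ v, ⟦F (e v)⟧ᵢ := by
    rw [IsoClass.mk_bigTensor]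
    exact (Fintype.prod_equiv e _ _ fun _ => rfl).symm
  refine ⟨compDerivable G _ _ (fun v => h (e v)) _ (hprod _), ?_⟩
  have D := (compDerivable G.dual (fun v => (M (e v)).dual) (fun v => (N (e v)).dual)
    (fun v => h (e v)) _ (hprod fun i => (M i).dual.par (N i).dual)).dual
  refine (Deriv.of_iso ?_).trans (D.trans (Deriv.of_iso ?_))
  · exact (iso_tensor (iso_dual_comp_dual G _) (iso_dual_comp_dual G.dual _)).symm.trans
      ⟨(dualPar _ _).symm⟩
  · exact (iso_dual_bigTensor _ _).trans <| iso_bigPar fun i =>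
      iso.trans ⟨dualPar _ _⟩ (iso_tensor ⟨dualDual _⟩ ⟨dualDual _⟩)

end GSP
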